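/- Let h(z) = Σ_{k=0}^∞ a_k z^k and g(z) = Σ_{k=1}^∞ b_k z^k be analytic on the unit disk 𝔻 with |h(z)| < 1 for all z ∈ 𝔻, and suppose g'(z) = η z h'(z) for some |η| = 1 and all z ∈ 𝔻. Then for every r with 0 ≤ r < 1, Σ_{k=1}^∞ k |a_k|² r^{2k} − Σ_{k=2}^∞ k |b_k|² r^{2k} ≤ (1 − |a_0|²)² · [2r²/(1 − r²) + log(1 − r²)]. -/

import Mathlib

/-!
Comparing the power series of `g'` and of `η z h'` gives `|b_{k+2}| = (k+1)/(k+2) |a_{k+1}|`, so the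
left-hand side is `∑ |a_{k+1}|² w_k(r²)` with the nonnegative weights
`w_k(x) = (k+1) x^{k+1} - (k+1)²/(k+2) x^{k+2}`, which sum to `2x/(1-x) + log(1-x)`.
Wiener's inequality `|a_n| ≤ 1 - |a_0|²` (`n ≥ 1`) then bounds each `|a_{k+1}|²`. It is
Schwarz–Pick at the origin applied to `w ↦ ∑ a_{nk} w^k`, a self-map of the disk because at
`w = z^n` it is the average of `h` over the rotations of `z` by the `n`-th roots of unity.
-/

open Complex FormalMultilinearSeries Metric Set
open scoped NNReal ComplexConjugate

section PowerSeries

variable {R : ℝ≥0} {c d : ℕ → ℂ} {F : ℂ → ℂ}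

theorem hasFPowerSeriesOnBall_ofScalars_of_hasSum (hR : 0 < R)
    (hc : ∀ z ∈ ball (0 : ℂ) R, HasSum (fun k => c k * z ^ k) (F z)) :
    HasFPowerSeriesOnBall F (ofScalars ℂ c) 0 R := by
  refine ⟨?_, by exact_mod_cast hR, fun {y} hy => ?_⟩
  · refine ENNReal.le_of_forall_nnreal_lt fun s hs => le_radius_of_summable _ ?_
    simpa [norm_mul, ofScalars_norm] using
      (hc s (by simpa using hs)).summable.norm
  · rw [eball_coe, mem_ball_zero_iff] at hy
    simpa [ofScalars_apply_eq, mul_comm] using hc y (by simpa using hy)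

theorem eq_of_hasSum_mul_pow (hR : 0 < R)
    (hc : ∀ z ∈ ball (0 : ℂ) R, HasSum (fun k => c k * z ^ k) (F z))
    (hd : ∀ z ∈ ball (0 : ℂ) R, HasSum (fun k => d k * z ^ k) (F z)) : c = d :=
  (ofScalars_series_eq_iff ℂ c d).mp <|
    (hasFPowerSeriesOnBall_ofScalars_of_hasSum hR hc).hasFPowerSeriesAt.eq_formalMultilinearSeries
      (hasFPowerSeriesOnBall_ofScalars_of_hasSum hR hd).hasFPowerSeriesAt

theorem hasSum_deriv_of_hasSum_mul_pow (hR : 0 < R)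
    (hc : ∀ z ∈ ball (0 : ℂ) R, HasSum (fun k => c k * z ^ k) (F z)) {z : ℂ}
    (hz : z ∈ ball (0 : ℂ) R) :
    HasSum (fun k : ℕ => ((k : ℂ) + 1) * c (k + 1) * z ^ k) (deriv F z) := by
  have hp := (hasFPowerSeriesOnBall_ofScalars_of_hasSum hR hc).fderiv
  have := (hp.hasSum (y := z) (by simpa [eball_coe] using hz)).mapL
    (ContinuousLinearMap.apply ℂ ℂ 1)
  simpa [apply_eq_pow_smul_coeff, coeff_ofScalars, fderiv_apply_one_eq_deriv, mul_comm,
    mul_left_comm] using this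

end PowerSeries

section SchwarzPick

noncomputable def blaschkeFactor (a w : ℂ) : ℂ := (w - a) / (1 - conj a * w)

variable {a w : ℂ}

theorem one_sub_conj_mul_ne_zero (ha : ‖a‖ < 1) (hw : ‖w‖ < 1) : 1 - conj a * w ≠ 0 := by
  refine sub_ne_zero.mpr fun h => ?_
  have : ‖conj a * w‖ < 1 := by
    rw [norm_mul, norm_conj]
    nlinarith [norm_nonneg a, norm_nonneg w]
  simp [← h] at this

theorem normSq_one_sub_conj_mul_sub_normSq_sub (a w : ℂ) :
    normSq (1 - conj a * w) - normSq (w - a) = (1 - normSq a) * (1 - normSq w) := by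
  simp only [normSq_apply, sub_re, sub_im, mul_re, mul_im, conj_re, conj_im, one_re, one_im]
  ring

theorem norm_blaschkeFactor_lt_one (ha : ‖a‖ < 1) (hw : ‖w‖ < 1) :
    ‖blaschkeFactor a w‖ < 1 := by
  have hden := norm_pos_iff.mpr (one_sub_conj_mul_ne_zero ha hw)
  rw [blaschkeFactor, norm_div, div_lt_one hden, ← sq_lt_sq₀ (norm_nonneg _) hden.le,
    Complex.sq_norm, Complex.sq_norm, ← sub_pos, normSq_one_sub_conj_mul_sub_normSq_sub,
    ← Complex.sq_norm, ← Complex.sq_norm]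
  exact mul_pos (by nlinarith [norm_nonneg a]) (by nlinarith [norm_nonneg w])

theorem differentiableAt_blaschkeFactor (ha : ‖a‖ < 1) (hw : ‖w‖ < 1) :
    DifferentiableAt ℂ (blaschkeFactor a) w := by
  unfold blaschkeFactor
  fun_prop (disch := exact one_sub_conj_mul_ne_zero ha hw)

theorem hasDerivAt_blaschkeFactor_self (ha : ‖a‖ < 1) :
    HasDerivAt (blaschkeFactor a) (((1 - ‖a‖ ^ 2 : ℝ) : ℂ))⁻¹ a := by
  have hden := one_sub_conj_mul_ne_zero ha ha
  push_cast
  rw [← conj_mul']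
  refine (((hasDerivAt_id' a).sub_const a).div
    (((hasDerivAt_id' a).const_mul (conj a)).const_sub 1) hden).congr_deriv ?_
  rw [sub_self, zero_mul, sub_zero, one_mul, sq, div_mul_cancel_right₀ hden]

theorem norm_deriv_zero_le_one_sub_sq {f : ℂ → ℂ} (hf : DifferentiableOn ℂ f (ball 0 1))
    (hfb : MapsTo f (ball 0 1) (ball 0 1)) : ‖deriv f 0‖ ≤ 1 - ‖f 0‖ ^ 2 := by
  set a := f 0
  have ha : ‖a‖ < 1 := mem_ball_zero_iff.mp (hfb (mem_ball_self one_pos))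
  have hfz : ∀ z ∈ ball (0 : ℂ) 1, ‖f z‖ < 1 := fun z hz => mem_ball_zero_iff.mp (hfb hz)
  have hFd : DifferentiableOn ℂ (blaschkeFactor a ∘ f) (ball 0 1) := fun z hz =>
    (differentiableAt_blaschkeFactor ha (hfz z hz)).comp_differentiableWithinAt z (hf z hz)
  have hFb : MapsTo (blaschkeFactor a ∘ f) (ball 0 1) (closedBall (blaschkeFactor a (f 0)) 1) :=
    fun z hz => by simpa [a, blaschkeFactor] using (norm_blaschkeFactor_lt_one ha (hfz z hz)).le
  have hderiv : deriv (blaschkeFactor a ∘ f) 0 = ((1 - ‖a‖ ^ 2 : ℝ) : ℂ)⁻¹ * deriv f 0 :=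
    ((hasDerivAt_blaschkeFactor_self ha).comp 0
      (hf.differentiableAt (ball_mem_nhds 0 one_pos)).hasDerivAt).deriv
  have hpos : 0 < 1 - ‖a‖ ^ 2 := by nlinarith [norm_nonneg a]
  have := norm_deriv_le_one_of_mapsTo_ball hFd hFb one_pos
  rwa [hderiv, norm_mul, norm_inv, norm_real, Real.norm_of_nonneg hpos.le, inv_mul_le_iff₀ hpos,
    mul_one] at this

end SchwarzPick

theorem IsPrimitiveRoot.sum_pow_mul_eq_ite {R : Type*} [CommRing R] [IsDomain R] {ζ : R} {n : ℕ}
    (hζ : IsPrimitiveRoot ζ n) (m : ℕ) :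
    ∑ j ∈ Finset.range n, ζ ^ (j * m) = if n ∣ m then (n : R) else 0 := by
  simp_rw [mul_comm _ m, pow_mul]
  split_ifs with hdvd
  · simp [(hζ.pow_eq_one_iff_dvd m).mpr hdvd]
  · have hne : ζ ^ m - 1 ≠ 0 := sub_ne_zero.mpr fun h => hdvd ((hζ.pow_eq_one_iff_dvd m).mp h)
    have := geom_sum_mul (ζ ^ m) n
    rwa [← pow_mul, mul_comm m n, pow_mul, hζ.pow_eq_one, one_pow, sub_self,
      mul_eq_zero_iff_right hne] at this

theorem hasSum_coeff_mul_mul_pow_of_isPrimitiveRoot {𝕜 : Type*} [NormedField 𝕜] [CharZero 𝕜]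
    {a : ℕ → 𝕜} {f : 𝕜 → 𝕜} {ζ z : 𝕜} {n : ℕ} (hζ : IsPrimitiveRoot ζ n) (hn : n ≠ 0)
    (hf : ∀ j, HasSum (fun k => a k * (ζ ^ j * z) ^ k) (f (ζ ^ j * z))) :
    HasSum (fun k => a (n * k) * (z ^ n) ^ k)
      ((n : 𝕜)⁻¹ * ∑ j ∈ Finset.range n, f (ζ ^ j * z)) := by
  have hsum := hasSum_sum (s := Finset.range n) fun j _ => hf j
  have hterm : ∀ m, ∑ j ∈ Finset.range n, a m * (ζ ^ j * z) ^ m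
      = if n ∣ m then (n : 𝕜) * (a m * z ^ m) else 0 := fun m => by
    have hrot : ∀ j, a m * (ζ ^ j * z) ^ m = ζ ^ (j * m) * (a m * z ^ m) := fun j => by
      rw [mul_pow, ← pow_mul]; ring
    simp_rw [hrot, ← Finset.sum_mul, hζ.sum_pow_mul_eq_ite m]
    split_ifs <;> simp
  simp_rw [hterm] at hsum
  have hvan : ∀ m ∉ Set.range (n * ·), (if n ∣ m then (n : 𝕜) * (a m * z ^ m) else 0) = 0 :=
    fun m hm => if_neg fun ⟨k, hk⟩ => hm ⟨k, hk.symm⟩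
  have := ((mul_right_injective₀ hn).hasSum_iff hvan).mpr hsum
  refine (this.mul_left (n : 𝕜)⁻¹).congr_fun fun k => ?_
  simp [pow_mul, hn]

theorem norm_coeff_one_le_one_sub_sq {c : ℕ → ℂ} {F : ℂ → ℂ}
    (hc : ∀ z ∈ ball (0 : ℂ) 1, HasSum (fun k => c k * z ^ k) (F z))
    (hF : MapsTo F (ball 0 1) (ball 0 1)) : ‖c 1‖ ≤ 1 - ‖c 0‖ ^ 2 := by
  have hp := hasFPowerSeriesOnBall_ofScalars_of_hasSum (R := 1) one_pos (by simpa using hc)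
  have hd := hp.differentiableOn
  rw [eball_coe, NNReal.coe_one] at hd
  have := norm_deriv_zero_le_one_sub_sq hd hF
  rw [hp.hasFPowerSeriesAt.deriv, ← hp.hasFPowerSeriesAt.coeff_zero (fun _ => 0)] at this
  simpa using this

/-- Wiener's inequality. -/
theorem norm_coeff_le_one_sub_sq {a : ℕ → ℂ} {f : ℂ → ℂ}
    (hfa : ∀ z ∈ ball (0 : ℂ) 1, HasSum (fun k => a k * z ^ k) (f z))
    (hf : MapsTo f (ball 0 1) (ball 0 1)) {n : ℕ} (hn : n ≠ 0) :
    ‖a n‖ ≤ 1 - ‖a 0‖ ^ 2 := by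
  obtain ⟨ζ, hζ⟩ : ∃ ζ : ℂ, IsPrimitiveRoot ζ n := ⟨_, isPrimitiveRoot_exp n hn⟩
  have hrot : ∀ z ∈ ball (0 : ℂ) 1, ∀ j, ζ ^ j * z ∈ ball (0 : ℂ) 1 := fun z hz j => by
    simpa [hζ.norm'_eq_one hn] using hz
  have hsection : ∀ w ∈ ball (0 : ℂ) 1,
      ∃ s ∈ ball (0 : ℂ) 1, HasSum (fun k => a (n * k) * w ^ k) s := by
    intro w hw
    obtain ⟨z, rfl⟩ := IsAlgClosed.exists_pow_nat_eq w (Nat.pos_of_ne_zero hn)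
    have hz : z ∈ ball (0 : ℂ) 1 := by
      rw [mem_ball_zero_iff, norm_pow] at hw
      exact mem_ball_zero_iff.mpr ((pow_lt_one_iff_of_nonneg (norm_nonneg z) hn).mp hw)
    refine ⟨_, ?_, hasSum_coeff_mul_mul_pow_of_isPrimitiveRoot hζ hn fun j => hfa _ (hrot z hz j)⟩
    rw [mem_ball_zero_iff, norm_mul, norm_inv, norm_natCast, inv_mul_lt_iff₀ (by positivity),
      mul_one]
    calc ‖∑ j ∈ Finset.range n, f (ζ ^ j * z)‖
        ≤ ∑ j ∈ Finset.range n, ‖f (ζ ^ j * z)‖ := norm_sum_le _ _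
      _ < ∑ _j ∈ Finset.range n, (1 : ℝ) :=
        Finset.sum_lt_sum_of_nonempty (Finset.nonempty_range_iff.mpr hn) fun j _ =>
          mem_ball_zero_iff.mp (hf (hrot z hz j))
      _ = n := by simp
  have hG : ∀ w ∈ ball (0 : ℂ) 1, HasSum (fun k => a (n * k) * w ^ k) (∑' k, a (n * k) * w ^ k)
      ∧ ∑' k, a (n * k) * w ^ k ∈ ball (0 : ℂ) 1 := fun w hw => by
    obtain ⟨s, hs, hsum⟩ := hsection w hw
    exact hsum.tsum_eq ▸ ⟨hsum, hs⟩
  simpa using norm_coeff_one_le_one_sub_sq (fun w hw => (hG w hw).1) fun w hw => (hG w hw).2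

theorem succ_mul_coeff_succ_eq_of_deriv_eq {R : ℝ≥0} (hR : 0 < R) {h g : ℂ → ℂ} {a b : ℕ → ℂ}
    {η : ℂ} (hha : ∀ z ∈ ball (0 : ℂ) R, HasSum (fun k => a k * z ^ k) (h z))
    (hga : ∀ z ∈ ball (0 : ℂ) R, HasSum (fun k => b k * z ^ k) (g z))
    (hd : ∀ z ∈ ball (0 : ℂ) R, deriv g z = η * z * deriv h z) (k : ℕ) :
    ((k : ℂ) + 1) * b (k + 1) = η * k * a k := by
  refine congrFun (eq_of_hasSum_mul_pow hR (F := deriv g)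
    (c := fun k => ((k : ℂ) + 1) * b (k + 1)) (d := fun k => η * k * a k)
    (fun z hz => hasSum_deriv_of_hasSum_mul_pow hR hga hz) fun z hz => ?_) k
  rw [hd z hz, ← hasSum_nat_add_iff' 1]
  simpa [pow_succ, mul_assoc, mul_left_comm, mul_comm] using
    (hasSum_deriv_of_hasSum_mul_pow hR hha hz).mul_left (η * z)

theorem hasSum_succ_mul_pow_sub_sq_div_mul_pow {x : ℝ} (hx : |x| < 1) :
    HasSum (fun k : ℕ => (k + 1) * x ^ (k + 1) - (k + 1) ^ 2 / (k + 2) * x ^ (k + 2))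
      (2 * x / (1 - x) + Real.log (1 - x)) := by
  have hA := hasSum_coe_mul_geometric_of_norm_lt_one (r := x) (by simpa using hx)
  have h1 : HasSum (fun k : ℕ => ((k : ℝ) + 1) * x ^ (k + 1)) (x / (1 - x) ^ 2) := by
    simpa using (hasSum_nat_add_iff' 1).mpr hA
  have h2 : HasSum (fun k : ℕ => ((k : ℝ) + 2) * x ^ (k + 2)) (x / (1 - x) ^ 2 - x) := by
    simpa [Finset.sum_range_succ, add_assoc, one_add_one_eq_two] using
      (hasSum_nat_add_iff' 2).mpr hA
  have h3 : HasSum (fun k : ℕ => x ^ (k + 2)) (x ^ 2 * (1 - x)⁻¹) := by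
    simpa [pow_add, mul_comm] using (hasSum_geometric_of_abs_lt_one hx).mul_left (x ^ 2)
  have h4 : HasSum (fun k : ℕ => x ^ (k + 2) / ((k : ℝ) + 2)) (-Real.log (1 - x) - x) := by
    simpa [Finset.sum_range_succ, add_assoc, one_add_one_eq_two] using
      (hasSum_nat_add_iff' 1).mpr (Real.hasSum_pow_div_log_of_abs_lt_one hx)
  have hx1 : 1 - x ≠ 0 := by linarith [le_abs_self x]
  -- `(k + 1) ^ 2 / (k + 2) = (k + 2) - 2 + 1 / (k + 2)`
  have hsum := (h1.sub h2).add ((h3.mul_left 2).sub h4)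
  rw [show x / (1 - x) ^ 2 - (x / (1 - x) ^ 2 - x) + (2 * (x ^ 2 * (1 - x)⁻¹)
      - (-Real.log (1 - x) - x)) = 2 * x / (1 - x) + Real.log (1 - x) by field_simp; ring] at hsum
  refine hsum.congr_fun fun k => ?_
  field_simp
  ring

theorem sq_div_mul_pow_le_succ_mul_pow {x : ℝ} (hx0 : 0 ≤ x) (hx1 : x ≤ 1) (k : ℕ) :
    ((k : ℝ) + 1) ^ 2 / (k + 2) * x ^ (k + 2) ≤ (k + 1) * x ^ (k + 1) := by
  have hk : ((k : ℝ) + 1) ^ 2 / (k + 2) ≤ k + 1 := by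
    rw [div_le_iff₀ (by positivity)]
    nlinarith
  exact mul_le_mul hk (pow_le_pow_of_le_one hx0 hx1 (by omega)) (by positivity) (by positivity)

theorem tsum_mul_sub_tsum_mul_le {x C : ℝ} {c : ℕ → ℝ} (hx0 : 0 ≤ x) (hx1 : x < 1)
    (hc : ∀ k, c k ∈ Icc 0 C) :
    ∑' k : ℕ, c k * ((k + 1) * x ^ (k + 1)) - ∑' k : ℕ, c k * ((k + 1) ^ 2 / (k + 2) * x ^ (k + 2))
      ≤ C * (2 * x / (1 - x) + Real.log (1 - x)) := by
  have hK := hasSum_succ_mul_pow_sub_sq_div_mul_pow (abs_lt.mpr ⟨by linarith, hx1⟩)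
  have hu : Summable fun k : ℕ => ((k : ℝ) + 1) * x ^ (k + 1) := by
    simpa using (summable_nat_add_iff 1).mpr
      (hasSum_coe_mul_geometric_of_norm_lt_one (r := x) (by simpa [abs_of_nonneg hx0])).summable
  have hcu : Summable fun k : ℕ => c k * ((k + 1) * x ^ (k + 1)) :=
    (hu.mul_left C).of_nonneg_of_le (fun k => mul_nonneg (hc k).1 (by positivity)) fun k =>
      mul_le_mul_of_nonneg_right (hc k).2 (by positivity)
  have hcv : Summable fun k : ℕ => c k * ((k + 1) ^ 2 / (k + 2) * x ^ (k + 2)) :=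
    hcu.of_nonneg_of_le (fun k => mul_nonneg (hc k).1 (by positivity)) fun k =>
      mul_le_mul_of_nonneg_left (sq_div_mul_pow_le_succ_mul_pow hx0 hx1.le k) (hc k).1
  calc _ = ∑' k : ℕ, c k * ((k + 1) * x ^ (k + 1) - (k + 1) ^ 2 / (k + 2) * x ^ (k + 2)) := by
        rw [← hcu.tsum_sub hcv]
        simp_rw [mul_sub]
    _ ≤ ∑' k : ℕ, C * ((k + 1) * x ^ (k + 1) - (k + 1) ^ 2 / (k + 2) * x ^ (k + 2)) :=
        Summable.tsum_le_tsum (fun k => mul_le_mul_of_nonneg_right (hc k).2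
            (sub_nonneg.mpr (sq_div_mul_pow_le_succ_mul_pow hx0 hx1.le k)))
          (by simpa only [mul_sub] using hcu.sub hcv) (hK.mul_left C).summable
    _ = _ := (hK.mul_left C).tsum_eq

theorem stmt16_general (h g : ℂ → ℂ) (a b : ℕ → ℂ)
    (hha : ∀ z ∈ ball (0:ℂ) 1, HasSum (fun k => a k * z ^ k) (h z))
    (hga : ∀ z ∈ ball (0:ℂ) 1, HasSum (fun k => b k * z ^ k) (g z))
    (hb : ∀ z ∈ ball (0:ℂ) 1, ‖h z‖ < 1)
    (η : ℂ) (hη : ‖η‖ = 1)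
    (hd : ∀ z ∈ ball (0:ℂ) 1, deriv g z = η * z * deriv h z)
    (r : ℝ) (hr0 : 0 ≤ r) (hr : r < 1) :
    (∑' k : ℕ, ((k:ℝ)+1) * (‖a (k+1)‖)^2 * r ^ (2*(k+1)))
      - (∑' k : ℕ, ((k:ℝ)+2) * (‖b (k+2)‖)^2 * r ^ (2*(k+2)))
      ≤ (1 - (‖a 0‖)^2)^2
          * (2 * r^2 / (1 - r^2) + Real.log (1 - r^2)) := by
  have hrel : ∀ k : ℕ, ‖b (k + 2)‖ = (k + 1) / (k + 2) * ‖a (k + 1)‖ := fun k => by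
    have := succ_mul_coeff_succ_eq_of_deriv_eq (R := 1) one_pos (by simpa using hha)
      (by simpa using hga) (by simpa using hd) (k + 1)
    have hnorm := congrArg norm this
    rw [norm_mul, norm_mul, norm_mul, hη, one_mul, ← Nat.cast_succ, norm_natCast,
      norm_natCast] at hnorm
    rw [div_mul_eq_mul_div, eq_div_iff (by positivity)]
    push_cast at hnorm
    linear_combination hnorm
  have hcoeff : ∀ k : ℕ, ‖a (k + 1)‖ ^ 2 ∈ Icc 0 ((1 - ‖a 0‖ ^ 2) ^ 2) := fun k =>
    ⟨sq_nonneg _, pow_le_pow_left₀ (norm_nonneg _) (norm_coeff_le_one_sub_sq hha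
      (fun z hz => mem_ball_zero_iff.mpr (hb z hz)) k.succ_ne_zero) 2⟩
  convert tsum_mul_sub_tsum_mul_le (sq_nonneg r) (by nlinarith) hcoeff using 3
  · ext k
    rw [pow_mul]
    ring
  · ext k
    rw [hrel k, pow_mul]
    field_simp

/-- Area bound for harmonic mappings with dilatation `g'(z) = η z h'(z)`, `|η| = 1`:
if `|h| < 1` on the unit disk, then for `0 ≤ r < 1`,
`∑_{k≥1} k|aₖ|² r^{2k} - ∑_{k≥2} k|bₖ|² r^{2k} ≤ (1-|a₀|²)²·[2r²/(1-r²) + log(1-r²)]`. -/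
theorem stmt16 (h g : ℂ → ℂ) (a b : ℕ → ℂ) (hb0 : b 0 = 0)
    (hha : ∀ z ∈ ball (0:ℂ) 1, HasSum (fun k => a k * z ^ k) (h z))
    (hga : ∀ z ∈ ball (0:ℂ) 1, HasSum (fun k => b k * z ^ k) (g z))
    (hhd : DifferentiableOn ℂ h (ball (0:ℂ) 1))
    (hgd : DifferentiableOn ℂ g (ball (0:ℂ) 1))
    (hb : ∀ z ∈ ball (0:ℂ) 1, ‖h z‖ < 1)
    (η : ℂ) (hη : ‖η‖ = 1)
    (hd : ∀ z ∈ ball (0:ℂ) 1, deriv g z = η * z * deriv h z)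
    (r : ℝ) (hr0 : 0 ≤ r) (hr : r < 1) :
    (∑' k : ℕ, ((k:ℝ)+1) * (‖a (k+1)‖)^2 * r ^ (2*(k+1)))
      - (∑' k : ℕ, ((k:ℝ)+2) * (‖b (k+2)‖)^2 * r ^ (2*(k+2)))
      ≤ (1 - (‖a 0‖)^2)^2
          * (2 * r^2 / (1 - r^2) + Real.log (1 - r^2)) :=
  stmt16_general h g a b hha hga hb η hη hd r hr0 hr
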